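/- arXiv:2001.01652 — 2 statements merged into one kernel-verified Lean document; each statement's English description precedes it below -/
import Mathlib

section
/- Let β̄ : ℝ → ℝ be a smooth, even function with 0 ≤ β̄ ≤ 1, β̄ = 1 on [−1,1] and supp(β̄) ⊂ (−2,2), and let β̃(z) = ∫₀^z β̄(s) ds. Then there exists a constant C > 0, depending only on the supremum norms of β̄ and its first derivative, such that for every δ > 0, every l ∈ {1,2,3} and every y ∈ ℝ³, the gradient of the truncation β_δ^l(y) = (1/δ) β̃(δ y_l) · ∏_{j ≠ l} β̄(δ y_j) satisfies ‖∇β_δ^l(y)‖ ≤ C. -/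
open MeasureTheory Real Set

/-- Coordinates of a Euclidean vector are bounded by its norm. -/
lemma coord_abs_le_norm (v : EuclideanSpace ℝ (Fin 3)) (i : Fin 3) : |v i| ≤ ‖v‖ := by
  rw [EuclideanSpace.norm_eq]
  calc |v i| = Real.sqrt (‖v i‖ ^ 2) := by
        rw [Real.norm_eq_abs, Real.sqrt_sq_eq_abs, abs_abs]
    _ ≤ Real.sqrt (∑ j, ‖v j‖ ^ 2) :=
        Real.sqrt_le_sqrt (Finset.single_le_sum (f := fun j => ‖v j‖ ^ 2)
          (fun j _ => sq_nonneg _) (Finset.mem_univ i))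

/-- Difference of products bounded by sum of differences, when factors are bounded by 1. -/
lemma abs_prod_sub_prod_le {ι : Type*} (S : Finset ι) (a b : ι → ℝ)
    (ha : ∀ i, |a i| ≤ 1) (hb : ∀ i, |b i| ≤ 1) :
    |∏ i ∈ S, a i - ∏ i ∈ S, b i| ≤ ∑ i ∈ S, |a i - b i| := by
  classical
  induction S using Finset.induction with
  | empty => simp
  | @insert j S hj ih =>
    rw [Finset.prod_insert hj, Finset.prod_insert hj, Finset.sum_insert hj]
    have key : a j * ∏ i ∈ S, a i - b j * ∏ i ∈ S, b i
        = a j * (∏ i ∈ S, a i - ∏ i ∈ S, b i) + (a j - b j) * ∏ i ∈ S, b i := by ring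
    rw [key]
    have hprodb : |∏ i ∈ S, b i| ≤ 1 := by
      rw [Finset.abs_prod]
      exact Finset.prod_le_one (fun i _ => abs_nonneg _) (fun i _ => hb i)
    calc |a j * (∏ i ∈ S, a i - ∏ i ∈ S, b i) + (a j - b j) * ∏ i ∈ S, b i|
        ≤ |a j| * |∏ i ∈ S, a i - ∏ i ∈ S, b i| + |a j - b j| * |∏ i ∈ S, b i| := by
          rw [← abs_mul, ← abs_mul]
          exact abs_add_le _ _
      _ ≤ 1 * (∑ i ∈ S, |a i - b i|) + |a j - b j| * 1 :=
          add_le_add (mul_le_mul (ha j) ih (abs_nonneg _) zero_le_one)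
            (mul_le_mul_of_nonneg_left hprodb (abs_nonneg _))
      _ ≤ |a j - b j| + ∑ i ∈ S, |a i - b i| := by nlinarith [abs_nonneg (a j - b j)]

/-- There is a constant `C > 0` (depending only on `β̄`) such that the gradient of
the truncation `β_δ^l(y) = (1/δ) β̃(δ y_l) ∏_{j ≠ l} β̄(δ y_j)` satisfies `‖∇β_δ^l(y)‖ ≤ C`
for all `δ > 0`, `l ∈ {1,2,3}` and `y ∈ ℝ³`. -/
theorem stmt_1
    (βbar : ℝ → ℝ)
    (hsmooth : ContDiff ℝ (⊤ : ℕ∞) βbar)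
    (heven : ∀ z, βbar (-z) = βbar z)
    (hnonneg : ∀ z, 0 ≤ βbar z) (hle_one : ∀ z, βbar z ≤ 1)
    (hone : ∀ z ∈ Set.Icc (-1 : ℝ) 1, βbar z = 1)
    (hsupp : Function.support βbar ⊆ Set.Ioo (-2 : ℝ) 2) :
    ∃ C > 0, ∀ δ > (0:ℝ), ∀ (l : Fin 3) (y : EuclideanSpace ℝ (Fin 3)),
      ‖gradient (fun y : EuclideanSpace ℝ (Fin 3) =>
          (1 / δ) * (∫ s in (0:ℝ)..(δ * y l), βbar s) *
            ∏ j ∈ Finset.univ.erase l, βbar (δ * y j)) y‖ ≤ C := by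
  classical
  have hcont : Continuous βbar := hsmooth.continuous
  have habs1 : ∀ z, |βbar z| ≤ 1 := fun z => by
    rw [abs_le]; exact ⟨by linarith [hnonneg z], hle_one z⟩
  -- compact support
  have hcs : HasCompactSupport βbar := by
    apply HasCompactSupport.intro (isCompact_Icc (a := (-2:ℝ)) (b := 2))
    intro x hx
    by_contra h
    exact hx (Set.mem_of_mem_of_subset (Function.mem_support.2 h)
      (hsupp.trans Set.Ioo_subset_Icc_self))
  -- bound on the derivative
  obtain ⟨M, hM⟩ := (hcs.deriv).exists_bound_of_continuous (hsmooth.continuous_deriv (by simp))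
  set M' : ℝ := max M 0 with hM'def
  have hM'0 : 0 ≤ M' := le_max_right _ _
  have hM' : ∀ z, ‖deriv βbar z‖ ≤ M' := fun z => (hM z).trans (le_max_left _ _)
  -- Lipschitz bound for βbar
  have hlipβ : ∀ u v : ℝ, |βbar u - βbar v| ≤ M' * |u - v| := by
    intro u v
    have := Convex.norm_image_sub_le_of_norm_deriv_le
      (f := βbar) (s := Set.univ) (C := M')
      (fun x _ => (hsmooth.differentiable (by simp)) x) (fun x _ => hM' x)
      convex_univ (Set.mem_univ v) (Set.mem_univ u)
    simpa [Real.norm_eq_abs] using this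
  -- bound on the antiderivative
  have hintβ : Integrable βbar := hcont.integrable_of_hasCompactSupport hcs
  set A : ℝ := ∫ s, βbar s with hAdef
  have hA0 : 0 ≤ A := integral_nonneg hnonneg
  have hA : ∀ z : ℝ, |∫ s in (0:ℝ)..z, βbar s| ≤ A := by
    intro z
    calc |∫ s in (0:ℝ)..z, βbar s| = ‖∫ s in (0:ℝ)..z, βbar s‖ := (Real.norm_eq_abs _).symm
      _ ≤ ∫ s in Set.uIoc (0:ℝ) z, ‖βbar s‖ :=
          intervalIntegral.norm_integral_le_integral_norm_uIoc
      _ = ∫ s in Set.uIoc (0:ℝ) z, βbar s := by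
          refine setIntegral_congr_fun measurableSet_uIoc fun s _ => ?_
          exact Real.norm_of_nonneg (hnonneg s)
      _ ≤ A := setIntegral_le_integral hintβ (Filter.Eventually.of_forall hnonneg)
  have hIInt : ∀ a b : ℝ, IntervalIntegrable βbar volume a b :=
    fun a b => hcont.intervalIntegrable a b
  -- Lipschitz bound for the antiderivative
  have hlipΦ : ∀ u v : ℝ, |(∫ s in (0:ℝ)..u, βbar s) - ∫ s in (0:ℝ)..v, βbar s| ≤ |u - v| := by
    intro u v
    have heq : (∫ s in (0:ℝ)..u, βbar s) - ∫ s in (0:ℝ)..v, βbar s = ∫ s in v..u, βbar s :=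
      intervalIntegral.integral_interval_sub_left (hIInt 0 u) (hIInt 0 v)
    rw [heq]
    have := intervalIntegral.norm_integral_le_of_norm_le_const
      (a := v) (b := u) (C := 1) (f := βbar) (fun x _ => by
        rw [Real.norm_eq_abs]; exact habs1 x)
    simpa [Real.norm_eq_abs] using this
  refine ⟨1 + 2 * M' * A, by positivity, ?_⟩
  intro δ hδ l y
  set f : EuclideanSpace ℝ (Fin 3) → ℝ := fun y =>
    (1 / δ) * (∫ s in (0:ℝ)..(δ * y l), βbar s) *
      ∏ j ∈ Finset.univ.erase l, βbar (δ * y j) with hfdef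
  show ‖gradient f y‖ ≤ 1 + 2 * M' * A
  rw [gradient, LinearIsometryEquiv.norm_map]
  refine norm_fderiv_le_of_lip' ℝ (by positivity) (Filter.Eventually.of_forall fun x => ?_)
  -- pointwise Lipschitz estimate
  set N : ℝ := ‖x - y‖ with hNdef
  have hN0 : 0 ≤ N := norm_nonneg _
  have hcoord : ∀ i : Fin 3, |x i - y i| ≤ N := by
    intro i
    have : x i - y i = (x - y) i := rfl
    rw [this]
    exact coord_abs_le_norm _ i
  set Φx : ℝ := ∫ s in (0:ℝ)..(δ * x l), βbar s with hΦx
  set Φy : ℝ := ∫ s in (0:ℝ)..(δ * y l), βbar s with hΦy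
  set Px : ℝ := ∏ j ∈ Finset.univ.erase l, βbar (δ * x j) with hPx
  set Py : ℝ := ∏ j ∈ Finset.univ.erase l, βbar (δ * y j) with hPy
  have hPyle : |Py| ≤ 1 := by
    rw [hPy, Finset.abs_prod]
    exact Finset.prod_le_one (fun i _ => abs_nonneg _) (fun i _ => habs1 _)
  have hPdiff : |Px - Py| ≤ 2 * (M' * (δ * N)) := by
    have h1 : |Px - Py| ≤ ∑ j ∈ Finset.univ.erase l, |βbar (δ * x j) - βbar (δ * y j)| :=
      abs_prod_sub_prod_le _ _ _ (fun i => habs1 _) (fun i => habs1 _)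
    have h2 : ∀ j ∈ Finset.univ.erase l,
        |βbar (δ * x j) - βbar (δ * y j)| ≤ M' * (δ * N) := by
      intro j _
      refine (hlipβ _ _).trans ?_
      have : |δ * x j - δ * y j| = δ * |x j - y j| := by
        rw [← mul_sub, abs_mul, abs_of_pos hδ]
      rw [this]
      exact mul_le_mul_of_nonneg_left (mul_le_mul_of_nonneg_left (hcoord j) hδ.le) hM'0
    have hcard : (Finset.univ.erase l).card = 2 := by
      rw [Finset.card_erase_of_mem (Finset.mem_univ l)]
      simp
    calc |Px - Py| ≤ ∑ j ∈ Finset.univ.erase l, (M' * (δ * N)) :=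
          h1.trans (Finset.sum_le_sum h2)
      _ = 2 * (M' * (δ * N)) := by
          rw [Finset.sum_const, hcard]; ring
  have hΦdiff : |Φx - Φy| ≤ δ * N := by
    refine (hlipΦ _ _).trans ?_
    have : |δ * x l - δ * y l| = δ * |x l - y l| := by
      rw [← mul_sub, abs_mul, abs_of_pos hδ]
    rw [this]
    exact mul_le_mul_of_nonneg_left (hcoord l) hδ.le
  have hΦxA : |Φx| ≤ A := hA _
  have hkey : f x - f y = (1 / δ) * Φx * (Px - Py) + (1 / δ) * (Φx - Φy) * Py := by
    simp only [hfdef]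
    ring
  have hδinv : |1 / δ| = 1 / δ := abs_of_pos (by positivity)
  calc ‖f x - f y‖ = |f x - f y| := rfl
    _ = |(1 / δ) * Φx * (Px - Py) + (1 / δ) * (Φx - Φy) * Py| := by rw [hkey]
    _ ≤ |1 / δ| * |Φx| * |Px - Py| + |1 / δ| * |Φx - Φy| * |Py| := by
        refine (abs_add_le _ _).trans ?_
        rw [abs_mul, abs_mul, abs_mul, abs_mul]
    _ ≤ (1 / δ) * A * (2 * (M' * (δ * N))) + (1 / δ) * (δ * N) * 1 := by
        rw [hδinv]
        gcongr <;> positivity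
    _ = (1 + 2 * M' * A) * N := by
        field_simp
        ring
end

section
/- Let d ≥ 1, γ > 1, and let ρ : ℝ^d → ℝ be measurable with ρ ≥ 0 almost everywhere, ∫_{ℝ^d} F(ρ) dx < ∞ where F(s) = (s^γ − 1 − γ(s−1))/(γ(γ−1)), and √ρ − 1 ∈ L²(ℝ^d). Let η : ℝ^d → ℝ be a smooth compactly supported function with 0 ≤ η ≤ 1, η = 1 on [−1/2,1/2]^d and supp(η) ⊂ [−1,1]^d, set η_n(x) = η(x/n) and ρ_n = (√ρ · η_n + (1 − η_n))². Then lim_{n→∞} ∫_{ℝ^d} F(ρ_n) dx = ∫_{ℝ^d} F(ρ) dx. -/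
open MeasureTheory Real Filter Topology

/-- Let `γ > 1`, `F(s) = (s^γ − 1 − γ(s−1))/(γ(γ−1))`, and let `ρ : ℝ^d → ℝ`
be measurable, a.e. nonnegative, with `∫ F(ρ) dx < ∞` and `√ρ − 1 ∈ L²(ℝ^d)`. With the
cut-offs `η_n(x) = η(x/n)` and `ρ_n = (√ρ η_n + (1 − η_n))²`, one has
`∫ F(ρ_n) dx → ∫ F(ρ) dx` as `n → ∞`. -/
theorem stmt_18 (d : ℕ) (hd : 1 ≤ d) (γ : ℝ) (hγ : 1 < γ)
    (F : ℝ → ℝ) (hF : ∀ s : ℝ, F s = (s ^ γ - 1 - γ * (s - 1)) / (γ * (γ - 1)))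
    (ρ : EuclideanSpace ℝ (Fin d) → ℝ) (hmeas : Measurable ρ)
    (hpos : ∀ᵐ x : EuclideanSpace ℝ (Fin d), 0 ≤ ρ x)
    (hfin : ∫⁻ x : EuclideanSpace ℝ (Fin d), ENNReal.ofReal (F (ρ x)) < ⊤)
    (hL2 : MemLp (fun x : EuclideanSpace ℝ (Fin d) => Real.sqrt (ρ x) - 1) 2 volume)
    (η : EuclideanSpace ℝ (Fin d) → ℝ)
    (hsmooth : ContDiff ℝ (⊤ : ℕ∞) η) (hcs : HasCompactSupport η)
    (hnonneg : ∀ x, 0 ≤ η x) (hle_one : ∀ x, η x ≤ 1)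
    (hone : ∀ x : EuclideanSpace ℝ (Fin d), (∀ i, |x i| ≤ 1 / 2) → η x = 1)
    (hsupp : tsupport η ⊆ {x : EuclideanSpace ℝ (Fin d) | ∀ i, |x i| ≤ 1}) :
    Tendsto (fun n : ℕ =>
        ∫ x : EuclideanSpace ℝ (Fin d),
          F ((Real.sqrt (ρ x) * η ((1 / (n:ℝ)) • x) + (1 - η ((1 / (n:ℝ)) • x))) ^ 2))
      atTop (nhds (∫ x : EuclideanSpace ℝ (Fin d), F (ρ x))) := by
  have hγ0 : (0:ℝ) < γ := lt_trans one_pos hγ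
  have hγ1 : (0:ℝ) < γ - 1 := by linarith
  have hc : (0:ℝ) < γ * (γ - 1) := mul_pos hγ0 hγ1
  -- derivative of F
  have hF' : ∀ x : ℝ, HasDerivAt F ((γ * x ^ (γ - 1) - γ) / (γ * (γ - 1))) x := by
    intro x
    have h1 : HasDerivAt (fun y : ℝ => y ^ γ) (γ * x ^ (γ - 1)) x :=
      Real.hasDerivAt_rpow_const (Or.inr hγ.le)
    have h2 : HasDerivAt (fun y : ℝ => (y ^ γ - 1 - γ * (y - 1)) / (γ * (γ - 1)))
        ((γ * x ^ (γ - 1) - γ * 1) / (γ * (γ - 1))) x := by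
      exact (((h1.sub_const 1).sub (((hasDerivAt_id x).sub_const 1).const_mul γ))).div_const _
    have hFeq : F = fun y : ℝ => (y ^ γ - 1 - γ * (y - 1)) / (γ * (γ - 1)) := funext hF
    rw [hFeq]
    simpa using h2
  have hcont : Continuous F :=
    continuous_iff_continuousAt.2 fun x => (hF' x).continuousAt
  -- monotone on [1, ∞)
  have hmono : MonotoneOn F (Set.Ici 1) := by
    apply monotoneOn_of_deriv_nonneg (convex_Ici 1) hcont.continuousOn
    · intro x _
      exact ((hF' x).differentiableAt).differentiableWithinAt
    · intro x hx
      rw [interior_Ici] at hx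
      rw [(hF' x).deriv]
      have h1 : 1 ≤ x ^ (γ - 1) := Real.one_le_rpow (le_of_lt hx) hγ1.le
      have : 0 ≤ γ * x ^ (γ - 1) - γ := by nlinarith
      positivity
  -- antitone on [0, 1]
  have hanti : AntitoneOn F (Set.Icc 0 1) := by
    apply antitoneOn_of_deriv_nonpos (convex_Icc 0 1) hcont.continuousOn
    · intro x _
      exact ((hF' x).differentiableAt).differentiableWithinAt
    · intro x hx
      rw [interior_Icc] at hx
      rw [(hF' x).deriv]
      have h1 : x ^ (γ - 1) ≤ 1 := Real.rpow_le_one hx.1.le hx.2.le hγ1.le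
      have hnum : γ * x ^ (γ - 1) - γ ≤ 0 := by nlinarith
      exact div_nonpos_of_nonpos_of_nonneg hnum hc.le
  have hF1 : F 1 = 0 := by
    rw [hF]; simp [Real.one_rpow]
  have hFnonneg : ∀ s : ℝ, 0 ≤ s → 0 ≤ F s := by
    intro s hs
    rcases le_total s 1 with h | h
    · have := hanti (Set.mem_Icc.2 ⟨hs, h⟩) (Set.mem_Icc.2 ⟨zero_le_one, le_refl 1⟩) h
      rwa [hF1] at this
    · have := hmono (Set.mem_Ici.2 (le_refl 1)) (Set.mem_Ici.2 h) h
      rwa [hF1] at this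
  -- key pointwise bound
  have key : ∀ s a : ℝ, 0 ≤ s → 0 ≤ a → a ≤ 1 →
      0 ≤ F ((Real.sqrt s * a + (1 - a)) ^ 2) ∧
        F ((Real.sqrt s * a + (1 - a)) ^ 2) ≤ F s := by
    intro s a hs ha0 ha1
    set t := Real.sqrt s * a + (1 - a) with ht
    have hsqnn : 0 ≤ Real.sqrt s := Real.sqrt_nonneg s
    have ht0 : 0 ≤ t := add_nonneg (mul_nonneg hsqnn ha0) (by linarith)
    have hsq : Real.sqrt s ^ 2 = s := Real.sq_sqrt hs
    have ht2 : 0 ≤ t ^ 2 := sq_nonneg t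
    refine ⟨hFnonneg _ ht2, ?_⟩
    rcases le_total (Real.sqrt s) 1 with h | h
    · have ht_le : t ≤ 1 := by nlinarith
      have ht_ge : Real.sqrt s ≤ t := by nlinarith
      have h1 : t ^ 2 ≤ 1 := by nlinarith
      have h2 : s ≤ t ^ 2 := by nlinarith
      have hs1 : s ≤ 1 := by nlinarith
      exact hanti (Set.mem_Icc.2 ⟨hs, hs1⟩) (Set.mem_Icc.2 ⟨ht2, h1⟩) h2
    · have ht_ge : 1 ≤ t := by nlinarith
      have ht_le : t ≤ Real.sqrt s := by nlinarith
      have h1 : 1 ≤ t ^ 2 := by nlinarith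
      have h2 : t ^ 2 ≤ s := by nlinarith
      exact hmono (Set.mem_Ici.2 h1) (Set.mem_Ici.2 (by nlinarith)) h2
  -- measurability of the approximants
  have hmeas_n : ∀ n : ℕ, Measurable (fun x : EuclideanSpace ℝ (Fin d) =>
      F ((Real.sqrt (ρ x) * η ((1 / (n:ℝ)) • x) + (1 - η ((1 / (n:ℝ)) • x))) ^ 2)) := by
    intro n
    have hη : Continuous fun x : EuclideanSpace ℝ (Fin d) => η ((1 / (n:ℝ)) • x) :=
      hsmooth.continuous.comp (continuous_const_smul _)
    have hsqm : Measurable fun x => Real.sqrt (ρ x) := Real.continuous_sqrt.measurable.comp hmeas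
    exact hcont.measurable.comp
      (((hsqm.mul hη.measurable).add ((measurable_const.sub hη.measurable))).pow_const 2)
  -- integrability of bound
  have hbd_int : Integrable (fun x => F (ρ x)) volume := by
    have hm : AEStronglyMeasurable (fun x => F (ρ x)) volume :=
      (hcont.measurable.comp hmeas).aestronglyMeasurable
    refine ⟨hm, ?_⟩
    rw [hasFiniteIntegral_iff_ofReal ?_]
    · exact hfin
    · filter_upwards [hpos] with x hx
      exact hFnonneg _ hx
  -- coordinate bound
  have hcoord : ∀ (y : EuclideanSpace ℝ (Fin d)) (i : Fin d), |y i| ≤ ‖y‖ := by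
    intro y i
    rw [EuclideanSpace.norm_eq]
    rw [← Real.sqrt_sq_eq_abs]
    apply Real.sqrt_le_sqrt
    have : y i ^ 2 = ‖y i‖ ^ 2 := by rw [Real.norm_eq_abs, sq_abs]
    rw [this]
    exact Finset.single_le_sum (fun j _ => sq_nonneg ‖y j‖) (Finset.mem_univ i)
  -- DCT
  apply tendsto_integral_of_dominated_convergence (fun x => F (ρ x))
    (fun n => (hmeas_n n).aestronglyMeasurable) hbd_int
  · intro n
    filter_upwards [hpos] with x hx
    obtain ⟨h0, hle⟩ := key (ρ x) (η ((1 / (n:ℝ)) • x)) hx (hnonneg _) (hle_one _)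
    rw [Real.norm_eq_abs, abs_of_nonneg h0]
    exact hle
  · filter_upwards [hpos] with x hx
    have htend : Tendsto (fun n : ℕ => (1 / (n:ℝ)) • x) atTop (𝓝 0) := by
      have := (tendsto_one_div_atTop_nhds_zero_nat (𝕜 := ℝ)).smul_const x
      simpa using this
    have hev : ∀ᶠ n : ℕ in atTop, η ((1 / (n:ℝ)) • x) = 1 := by
      have hball : Metric.ball (0 : EuclideanSpace ℝ (Fin d)) (1/2) ∈
          𝓝 (0 : EuclideanSpace ℝ (Fin d)) := Metric.ball_mem_nhds 0 (by norm_num)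
      filter_upwards [htend.eventually_mem hball] with n hn
      apply hone
      intro i
      have : ‖(1 / (n:ℝ)) • x‖ < 1/2 := by
        rw [Metric.mem_ball, dist_zero_right] at hn; exact hn
      exact le_trans (hcoord _ i) this.le
    refine Tendsto.congr' ?_ tendsto_const_nhds
    filter_upwards [hev] with n hn
    rw [hn]
    rw [mul_one]
    norm_num [Real.sq_sqrt hx]
end
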